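/- arXiv:1808.07106 — 2 statements merged into one kernel-verified Lean document; each statement's English description precedes it below -/
import Mathlib

section
/- For every real t and every natural number n, let α_n(t) := (2/π) ∫_{-1}^{1} √(1-ζ²) e^{-itζ} U_n(ζ) dζ; then there is a constant C (independent of n and t) such that |α_n(t)| ≤ C |t|^n / n!. -/
open intervalIntegral Polynomial.Chebyshev

/-- The Chebyshev transform coefficient `α_n(t)`. -/
noncomputable def alphaCoeff (n : ℕ) (t : ℝ) : ℂ :=
  (2 / Real.pi : ℂ) *
    ∫ ζ in (-1 : ℝ)..1,
      (Real.sqrt (1 - ζ ^ 2) : ℂ) * Complex.exp (-Complex.I * t * ζ) *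
        (((Polynomial.Chebyshev.U ℝ (n : ℤ)).eval ζ : ℝ) : ℂ)


lemma factorial_le_half_pow (n : ℕ) : (n.factorial : ℝ) ≤ ((n+1)/2)^n := by
  induction n with
  | zero => norm_num
  | succ n ih =>
    have hcast : (((n:ℕ)+1:ℕ):ℝ) + 1 = (n:ℝ) + 2 := by push_cast; ring
    rw [hcast]
    have h1 : (0:ℝ) < (n:ℝ) + 1 := by positivity
    have key : (2:ℝ) ≤ ((n+2)/(n+1))^(n+1) := by
      have hb : (-2:ℝ) ≤ 1/((n:ℝ)+1) := by
        have : (0:ℝ) ≤ 1/((n:ℝ)+1) := by positivity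
        linarith
      have := one_add_mul_le_pow (a := (1:ℝ)/((n:ℝ)+1)) hb (n+1)
      calc (2:ℝ) = 1 + ((n:ℕ)+1 : ℕ) * (1/((n:ℝ)+1)) := by push_cast; field_simp; norm_num
        _ ≤ (1 + 1/((n:ℝ)+1))^(n+1) := this
        _ = (((n:ℝ)+2)/((n:ℝ)+1))^(n+1) := by congr 1; field_simp; ring
    have h2 : (0:ℝ) < ((n:ℝ)+1)/2 := by positivity
    calc ((n+1).factorial : ℝ) = ((n:ℝ)+1) * n.factorial := by
          push_cast [Nat.factorial_succ]; ring
      _ ≤ ((n:ℝ)+1) * (((n:ℝ)+1)/2)^n :=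
          mul_le_mul_of_nonneg_left ih (by positivity)
      _ = 2 * (((n:ℝ)+1)/2)^(n+1) := by rw [pow_succ]; ring
      _ ≤ (((n:ℝ)+2)/((n:ℝ)+1))^(n+1) * (((n:ℝ)+1)/2)^(n+1) :=
          mul_le_mul_of_nonneg_right key (le_of_lt (pow_pos h2 (n+1)))
      _ = (((n:ℝ)+2)/2)^(n+1) := by rw [← mul_pow]; congr 1; field_simp

lemma integral_cos_nat (m : ℕ) (hm : 0 < m) :
    ∫ θ in (0:ℝ)..Real.pi, Real.cos (m * θ) = 0 := by
  have hc : (m:ℝ) ≠ 0 := by positivity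
  rw [intervalIntegral.integral_comp_mul_left (fun x => Real.cos x) hc]
  simp [Real.sin_nat_mul_pi]

lemma cos_pow_orth : ∀ (k m : ℕ), k < m →
    ∫ θ in (0:ℝ)..Real.pi, Real.cos (m*θ) * Real.cos θ ^ k = 0 := by
  intro k
  induction k with
  | zero =>
    intro m hm; simpa using integral_cos_nat m hm
  | succ k ih =>
    intro m hm
    obtain ⟨j, rfl⟩ : ∃ j, m = j + 2 := ⟨m - 2, by omega⟩
    have hid : ∀ θ : ℝ, Real.cos ((j+2:ℕ)*θ) * Real.cos θ ^ (k+1)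
        = (Real.cos ((j+3:ℕ)*θ) * Real.cos θ ^ k + Real.cos ((j+1:ℕ)*θ) * Real.cos θ ^ k) / 2 := by
      intro θ
      have h1 : ((j+3:ℕ):ℝ)*θ = ((j+2:ℕ):ℝ)*θ + θ := by push_cast; ring
      have h2 : ((j+1:ℕ):ℝ)*θ = ((j+2:ℕ):ℝ)*θ - θ := by push_cast; ring
      rw [h1, h2, Real.cos_add, Real.cos_sub, pow_succ]
      ring
    rw [intervalIntegral.integral_congr (g := fun θ => (Real.cos ((j+3:ℕ)*θ) * Real.cos θ ^ k + Real.cos ((j+1:ℕ)*θ) * Real.cos θ ^ k) / 2) (fun θ _ => hid θ)]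
    have i1 : IntervalIntegrable (fun θ => Real.cos ((j+3:ℕ)*θ) * Real.cos θ ^ k) MeasureTheory.volume 0 Real.pi := by
      apply Continuous.intervalIntegrable; continuity
    have i2 : IntervalIntegrable (fun θ => Real.cos ((j+1:ℕ)*θ) * Real.cos θ ^ k) MeasureTheory.volume 0 Real.pi := by
      apply Continuous.intervalIntegrable; continuity
    rw [intervalIntegral.integral_div, intervalIntegral.integral_add i1 i2,
      ih (j+3) (by omega), ih (j+1) (by omega)]
    norm_num

lemma contAux (c : ℝ) (k : ℕ) : Continuous fun θ : ℝ => Real.cos (c*θ) * Real.cos θ ^ k :=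
  (Real.continuous_cos.comp (continuous_const.mul continuous_id)).mul (Real.continuous_cos.pow k)

set_option maxHeartbeats 1000000 in
lemma sqrtU_orth (n k : ℕ) (hk : k < n) :
    ∫ ζ in (-1:ℝ)..1, Real.sqrt (1-ζ^2) * ((Polynomial.Chebyshev.U ℝ (n:ℤ)).eval ζ) * ζ^k = 0 := by
  set g : ℝ → ℝ := fun ζ => Real.sqrt (1-ζ^2) * ((Polynomial.Chebyshev.U ℝ (n:ℤ)).eval ζ) * ζ^k with hgdef
  have hg : Continuous g :=
    (((continuous_const.sub (continuous_pow 2)).sqrt).mul (Polynomial.continuous _)).mul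
      (continuous_pow k)
  have hderiv : ∀ θ ∈ Set.uIcc (0:ℝ) Real.pi, HasDerivAt Real.cos (-Real.sin θ) θ :=
    fun θ _ => Real.hasDerivAt_cos θ
  have hsub := intervalIntegral.integral_comp_mul_deriv (a := 0) (b := Real.pi)
    hderiv (Real.continuous_sin.neg.continuousOn) hg
  rw [Real.cos_zero, Real.cos_pi] at hsub
  have key : ∫ θ in (0:ℝ)..Real.pi, (g ∘ Real.cos) θ * (-Real.sin θ) = 0 := by
    have hpt : Set.EqOn (fun θ => (g ∘ Real.cos) θ * (-Real.sin θ))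
        (fun θ => -((Real.cos (n*θ) * Real.cos θ ^ k - Real.cos (((n:ℕ)+2:ℕ)*θ) * Real.cos θ ^ k) / 2))
        (Set.uIcc (0:ℝ) Real.pi) := by
      intro θ hθ
      rw [Set.uIcc_of_le Real.pi_pos.le] at hθ
      have hs : 0 ≤ Real.sin θ := Real.sin_nonneg_of_nonneg_of_le_pi hθ.1 hθ.2
      have h1 : Real.sqrt (1 - Real.cos θ^2) = Real.sin θ := by
        rw [← Real.sin_sq, Real.sqrt_sq hs]
      have hU : (Polynomial.Chebyshev.U ℝ (n:ℤ)).eval (Real.cos θ) * Real.sin θ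
          = Real.sin (((n:ℝ)+1)*θ) := by
        have := Polynomial.Chebyshev.U_real_cos θ (n:ℤ)
        push_cast at this
        exact this
      have hps : Real.cos ((n:ℝ)*θ) - Real.cos (((n:ℝ)+2)*θ)
          = 2 * (Real.sin (((n:ℝ)+1)*θ) * Real.sin θ) := by
        have e1 : (n:ℝ)*θ = ((n:ℝ)+1)*θ - θ := by ring
        have e2 : ((n:ℝ)+2)*θ = ((n:ℝ)+1)*θ + θ := by ring
        rw [e1, e2, Real.cos_sub, Real.cos_add]; ring
      simp only [Function.comp, hgdef, h1]
      push_cast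
      linear_combination (-Real.sin θ * Real.cos θ ^ k) * hU + (Real.cos θ ^ k / 2) * hps
    rw [intervalIntegral.integral_congr hpt]
    rw [intervalIntegral.integral_neg, intervalIntegral.integral_div,
      intervalIntegral.integral_sub ((contAux n k).intervalIntegrable _ _)
        ((contAux ((n:ℕ)+2:ℕ) k).intervalIntegrable _ _)]
    have z1 := cos_pow_orth k n hk
    have z2 := cos_pow_orth k (n+2) (by omega)
    push_cast at z1 z2 ⊢
    rw [z1, z2]
    norm_num
  rw [key] at hsub
  have h2 : ∫ ζ in (1:ℝ)..(-1), g ζ = 0 := hsub.symm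
  rw [intervalIntegral.integral_symm] at h2
  exact neg_eq_zero.mp h2

set_option maxHeartbeats 1000000 in
lemma exp_tail_bound (n : ℕ) (z : ℂ) (hz : ‖z‖ ≤ ((n:ℝ)+1)/2) :
    ‖Complex.exp z - ∑ k ∈ Finset.range n, z^k / k.factorial‖ ≤ 2 * ‖z‖^n / n.factorial := by
  have hsum : Summable (fun k => z^k / (k.factorial:ℂ)) := NormedSpace.expSeries_div_summable z
  have hexp : Complex.exp z = ∑' k : ℕ, z^k / (k.factorial:ℂ) := by
    rw [Complex.exp_eq_exp_ℂ, NormedSpace.exp_eq_tsum_div]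
  have hsplit : Complex.exp z - ∑ k ∈ Finset.range n, z^k / k.factorial
      = ∑' i : ℕ, z^(i+n) / ((i+n).factorial : ℂ) := by
    rw [hexp, ← Summable.sum_add_tsum_nat_add n hsum]
    ring
  rw [hsplit]
  have hnorm : Summable fun i : ℕ => ‖z^(i+n) / ((i+n).factorial : ℂ)‖ := by
    exact (summable_nat_add_iff n).2 (NormedSpace.norm_expSeries_div_summable z)
  have hbound : ∀ i : ℕ, ‖z^(i+n) / ((i+n).factorial : ℂ)‖ ≤ (‖z‖^n / n.factorial) * (1/2)^i := by
    intro i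
    rw [norm_div, norm_pow, Complex.norm_natCast]
    have hfact : (n.factorial : ℝ) * ((n:ℝ)+1)^i ≤ ((i+n).factorial : ℝ) := by
      exact_mod_cast Nat.cast_le.mpr (le_of_le_of_eq Nat.factorial_mul_pow_le_factorial (by rw [Nat.add_comm]))
    have hzi : ‖z‖^i ≤ (((n:ℝ)+1)/2)^i := pow_le_pow_left₀ (norm_nonneg z) hz i
    have hfpos : (0:ℝ) < ((i+n).factorial : ℝ) := by exact_mod_cast Nat.factorial_pos _
    have hnpos : (0:ℝ) < (n.factorial : ℝ) := by exact_mod_cast Nat.factorial_pos _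
    rw [pow_add, div_le_iff₀ hfpos]
    calc ‖z‖^i * ‖z‖^n ≤ (((n:ℝ)+1)/2)^i * ‖z‖^n := by
          exact mul_le_mul_of_nonneg_right hzi (by positivity)
      _ = (‖z‖^n / n.factorial) * (1/2)^i * ((n.factorial:ℝ) * ((n:ℝ)+1)^i) := by
          have hp : (((n:ℝ)+1)/2)^i = (1/2)^i * ((n:ℝ)+1)^i := by rw [← mul_pow]; congr 1; ring
          rw [hp, show (‖z‖^n / n.factorial) * (1/2)^i * ((n.factorial:ℝ) * ((n:ℝ)+1)^i) = ‖z‖^n * (1/2)^i * ((n:ℝ)+1)^i * ((n.factorial:ℝ) / n.factorial) by ring, div_self hnpos.ne']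
          ring
      _ ≤ (‖z‖^n / n.factorial) * (1/2)^i * ((i+n).factorial : ℝ) := by
          exact mul_le_mul_of_nonneg_left hfact (by positivity)
  calc ‖∑' i : ℕ, z^(i+n) / ((i+n).factorial : ℂ)‖ ≤ ∑' i : ℕ, ‖z^(i+n) / ((i+n).factorial : ℂ)‖ :=
        norm_tsum_le_tsum_norm hnorm
    _ ≤ ∑' i : ℕ, (‖z‖^n / n.factorial) * (1/2)^i := by
        exact Summable.tsum_le_tsum hbound hnorm (summable_geometric_two.mul_left _)
    _ = (‖z‖^n / n.factorial) * 2 := by rw [tsum_mul_left, tsum_geometric_two]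
    _ = 2 * ‖z‖^n / n.factorial := by ring

lemma sqrtU_le_one (n : ℕ) {ζ : ℝ} (h1 : -1 ≤ ζ) (h2 : ζ ≤ 1) :
    |Real.sqrt (1-ζ^2) * ((Polynomial.Chebyshev.U ℝ (n:ℤ)).eval ζ)| ≤ 1 := by
  have hc : Real.cos (Real.arccos ζ) = ζ := Real.cos_arccos h1 h2
  have hs : Real.sin (Real.arccos ζ) = Real.sqrt (1-ζ^2) := Real.sin_arccos ζ
  have := Polynomial.Chebyshev.U_real_cos (Real.arccos ζ) (n:ℤ)
  rw [hc, hs] at this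
  rw [mul_comm, this]
  exact Real.abs_sin_le_one _

set_option maxHeartbeats 1000000 in
theorem alphaCoeff_abs_le_pow_div_factorial :
    ∃ C : ℝ, 0 < C ∧ ∀ (t : ℝ) (n : ℕ),
      ‖alphaCoeff n t‖ ≤ C * |t| ^ n / n.factorial := by
  refine ⟨8, by norm_num, fun t n => ?_⟩
  have hnfac : (0:ℝ) < n.factorial := by exact_mod_cast Nat.factorial_pos n
  set F : ℝ → ℂ := fun ζ =>
    (Real.sqrt (1 - ζ ^ 2) : ℂ) * Complex.exp (-Complex.I * t * ζ) *
      (((Polynomial.Chebyshev.U ℝ (n : ℤ)).eval ζ : ℝ) : ℂ) with hF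
  have hFc : Continuous F := by
    refine Continuous.mul (Continuous.mul ?_ ?_) ?_
    · exact Complex.continuous_ofReal.comp ((continuous_const.sub (continuous_pow 2)).sqrt)
    · exact Complex.continuous_exp.comp (by continuity)
    · exact Complex.continuous_ofReal.comp (Polynomial.continuous _)
  have h2pi : ‖(2 / Real.pi : ℂ)‖ = 2 / Real.pi := by
    rw [norm_div, Complex.norm_two, Complex.norm_real, Real.norm_eq_abs, abs_of_pos Real.pi_pos]
  have habs : ‖alphaCoeff n t‖ = (2/Real.pi) * ‖∫ ζ in (-1:ℝ)..1, F ζ‖ := by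
    rw [alphaCoeff, norm_mul, h2pi]
  have hexpnorm : ∀ ζ : ℝ, ‖Complex.exp (-Complex.I * t * ζ)‖ = 1 := by
    intro ζ
    rw [Complex.norm_exp]
    simp
  have hFbound : ∀ ζ ∈ Set.uIoc (-1:ℝ) 1, ‖F ζ‖ ≤ 1 := by
    intro ζ hζ
    rw [Set.uIoc_of_le (by norm_num : (-1:ℝ) ≤ 1)] at hζ
    have h1 : -1 ≤ ζ := le_of_lt hζ.1
    have h2 : ζ ≤ 1 := hζ.2
    calc ‖F ζ‖ = ‖(Real.sqrt (1-ζ^2) : ℂ)‖ * ‖Complex.exp (-Complex.I*t*ζ)‖ *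
          ‖(((Polynomial.Chebyshev.U ℝ (n:ℤ)).eval ζ : ℝ) : ℂ)‖ := by
          rw [hF]; simp [norm_mul]
      _ = |Real.sqrt (1-ζ^2) * ((Polynomial.Chebyshev.U ℝ (n:ℤ)).eval ζ)| := by
          rw [hexpnorm ζ, Complex.norm_real, Complex.norm_real, mul_one,
            Real.norm_eq_abs, Real.norm_eq_abs, abs_mul]
      _ ≤ 1 := sqrtU_le_one n h1 h2
  by_cases ht : |t| ≤ ((n:ℝ)+1)/2
  · -- small t: use orthogonality
    set S : ℝ → ℂ := fun ζ =>
      (Real.sqrt (1 - ζ ^ 2) : ℂ) * (∑ k ∈ Finset.range n, (-Complex.I*t*ζ)^k / k.factorial) *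
        (((Polynomial.Chebyshev.U ℝ (n : ℤ)).eval ζ : ℝ) : ℂ) with hS
    have hSc : Continuous S := by
      refine Continuous.mul (Continuous.mul ?_ ?_) ?_
      · exact Complex.continuous_ofReal.comp ((continuous_const.sub (continuous_pow 2)).sqrt)
      · exact continuous_finset_sum _ fun k _ => (by continuity : Continuous fun ζ : ℝ => (-Complex.I*t*ζ)^k / k.factorial)
      · exact Complex.continuous_ofReal.comp (Polynomial.continuous _)
    have hS0 : ∫ ζ in (-1:ℝ)..1, S ζ = 0 := by
      have hrw : S = fun ζ => ∑ k ∈ Finset.range n, ((-Complex.I*t)^k/k.factorial) *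
          (((Real.sqrt (1-ζ^2) * ((Polynomial.Chebyshev.U ℝ (n:ℤ)).eval ζ) * ζ^k : ℝ)) : ℂ) := by
        funext ζ
        rw [hS]
        dsimp only
        rw [Finset.mul_sum, Finset.sum_mul]
        refine Finset.sum_congr rfl fun k _ => ?_
        push_cast
        ring
      rw [hrw, intervalIntegral.integral_finset_sum]
      · refine Finset.sum_eq_zero fun k hk => ?_
        rw [intervalIntegral.integral_const_mul, intervalIntegral.integral_ofReal,
          sqrtU_orth n k (Finset.mem_range.mp hk)]
        simp
      · intro k hk
        apply Continuous.intervalIntegrable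
        exact continuous_const.mul (Complex.continuous_ofReal.comp
          ((((continuous_const.sub (continuous_pow 2)).sqrt).mul (Polynomial.continuous _)).mul
            (continuous_pow k)))
    have hFS : ∫ ζ in (-1:ℝ)..1, F ζ = ∫ ζ in (-1:ℝ)..1, (F ζ - S ζ) := by
      rw [intervalIntegral.integral_sub (hFc.intervalIntegrable _ _) (hSc.intervalIntegrable _ _),
        hS0, sub_zero]
    have hptb : ∀ ζ ∈ Set.uIoc (-1:ℝ) 1, ‖F ζ - S ζ‖ ≤ 2 * |t|^n / n.factorial := by
      intro ζ hζ
      rw [Set.uIoc_of_le (by norm_num : (-1:ℝ) ≤ 1)] at hζ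
      have h1 : -1 ≤ ζ := le_of_lt hζ.1
      have h2 : ζ ≤ 1 := hζ.2
      have hz : ‖-Complex.I * t * ζ‖ ≤ ((n:ℝ)+1)/2 := by
        have : ‖-Complex.I * t * ζ‖ = |t| * |ζ| := by
          simp [norm_mul, Complex.norm_real, Real.norm_eq_abs]
        rw [this]
        calc |t| * |ζ| ≤ |t| * 1 := by
              exact mul_le_mul_of_nonneg_left (abs_le.mpr ⟨h1, h2⟩) (abs_nonneg t)
          _ ≤ ((n:ℝ)+1)/2 := by rw [mul_one]; exact ht
      have hzn : ‖-Complex.I * t * ζ‖ ≤ |t| := by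
        have : ‖-Complex.I * t * ζ‖ = |t| * |ζ| := by
          simp [norm_mul, Complex.norm_real, Real.norm_eq_abs]
        rw [this]
        calc |t| * |ζ| ≤ |t| * 1 :=
              mul_le_mul_of_nonneg_left (abs_le.mpr ⟨h1, h2⟩) (abs_nonneg t)
          _ = |t| := mul_one _
      have hfs : F ζ - S ζ = (Real.sqrt (1-ζ^2) : ℂ) *
          (Complex.exp (-Complex.I*t*ζ) - ∑ k ∈ Finset.range n, (-Complex.I*t*ζ)^k / k.factorial) *
          (((Polynomial.Chebyshev.U ℝ (n:ℤ)).eval ζ : ℝ) : ℂ) := by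
        rw [hF, hS]; ring
      calc ‖F ζ - S ζ‖ = |Real.sqrt (1-ζ^2) * ((Polynomial.Chebyshev.U ℝ (n:ℤ)).eval ζ)| *
            ‖Complex.exp (-Complex.I*t*ζ) - ∑ k ∈ Finset.range n, (-Complex.I*t*ζ)^k / k.factorial‖ := by
            rw [hfs, norm_mul, norm_mul, Complex.norm_real, Complex.norm_real,
              Real.norm_eq_abs, Real.norm_eq_abs, abs_mul]
            ring
        _ ≤ 1 * (2 * ‖-Complex.I*t*ζ‖^n / n.factorial) := by
            refine mul_le_mul (sqrtU_le_one n h1 h2) (exp_tail_bound n _ hz) (norm_nonneg _) zero_le_one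
        _ ≤ 2 * |t|^n / n.factorial := by
            rw [one_mul]
            gcongr

    have hIb : ‖∫ ζ in (-1:ℝ)..1, F ζ‖ ≤ (2 * |t|^n / n.factorial) * 2 := by
      rw [hFS]
      have := intervalIntegral.norm_integral_le_of_norm_le_const hptb
      rw [show |(1:ℝ) - (-1)| = 2 by norm_num] at this
      exact this
    rw [habs]
    have hpi1 : (1:ℝ) ≤ Real.pi := by linarith [Real.pi_gt_three]
    calc (2/Real.pi) * ‖∫ ζ in (-1:ℝ)..1, F ζ‖ ≤ (2/Real.pi) * ((2 * |t|^n / n.factorial) * 2) := by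
          exact mul_le_mul_of_nonneg_left hIb (by positivity)
      _ = (8/Real.pi) * (|t|^n / n.factorial) := by ring
      _ ≤ 8 * (|t|^n / n.factorial) := by
          refine mul_le_mul_of_nonneg_right ?_ (by positivity)
          rw [div_le_iff₀ Real.pi_pos]
          nlinarith
      _ = 8 * |t|^n / n.factorial := by ring
  · -- large t: trivial bound
    push_neg at ht
    have hIb : ‖∫ ζ in (-1:ℝ)..1, F ζ‖ ≤ 2 := by
      have := intervalIntegral.norm_integral_le_of_norm_le_const hFbound
      rw [show (1:ℝ) * |(1:ℝ) - (-1)| = 2 by norm_num] at this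
      exact this
    have htpow : (1:ℝ) ≤ |t|^n / n.factorial := by
      rw [le_div_iff₀ hnfac, one_mul]
      calc (n.factorial : ℝ) ≤ (((n:ℝ)+1)/2)^n := factorial_le_half_pow n
        _ ≤ |t|^n := pow_le_pow_left₀ (by positivity) ht.le n
    rw [habs]
    calc (2/Real.pi) * ‖∫ ζ in (-1:ℝ)..1, F ζ‖ ≤ (2/Real.pi) * 2 :=
          mul_le_mul_of_nonneg_left hIb (by positivity)
      _ ≤ 2 := by
          have hpi : (2:ℝ) ≤ Real.pi := by linarith [Real.pi_gt_three]
          rw [div_mul_eq_mul_div, div_le_iff₀ Real.pi_pos]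
          nlinarith
      _ ≤ 8 * (|t|^n / n.factorial) := by linarith
      _ = 8 * |t|^n / n.factorial := by ring
end

section
/- Let κ, μ, T be positive reals with κ < μ. There exists a constant C and M₀ such that for all M ≥ M₀: Σ over pairs of integers (p₁, p₂) with p₁ + p₂ > M^μ, p₁, p₂ ≥ 1, of (C M^κ T)^{2(p₁+p₂)} / (p₁!² p₂!²) ≤ (C' M^{κ−μ} T)^{2 M^μ} · M^{2μ} for some constant C', i.e., the tail sum decays superexponentially in M^μ when κ < μ. -/
open Real Filter
set_option maxHeartbeats 1000000

lemma my_choose_le_two_pow (n k : ℕ) : n.choose k ≤ 2 ^ n := by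
  rcases le_or_gt k n with h | h
  · calc n.choose k ≤ ∑ m ∈ Finset.range (n+1), n.choose m :=
        Finset.single_le_sum (fun i _ => Nat.zero_le _)
          (Finset.mem_range.mpr (Nat.lt_succ_of_le h))
    _ = 2 ^ n := Nat.sum_range_choose n
  · simp [Nat.choose_eq_zero_of_lt h]

lemma my_pow_le_exp_mul_factorial (n : ℕ) : (n:ℝ)^n ≤ Real.exp 1 ^ n * n.factorial := by
  have hfac : (0:ℝ) < n.factorial := by positivity
  have h1 : (n:ℝ)^n / n.factorial ≤ Real.exp 1 ^ n := by
    calc (n:ℝ)^n / n.factorial ≤ ∑ i ∈ Finset.range (n+1), (n:ℝ)^i / i.factorial :=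
        Finset.single_le_sum (f := fun i => (n:ℝ)^i / i.factorial) (fun i _ => by positivity)
          (Finset.mem_range.mpr (Nat.lt_succ_self n))
      _ ≤ Real.exp n := Real.sum_le_exp_of_nonneg (Nat.cast_nonneg n) _
      _ = Real.exp 1 ^ n := by rw [← Real.exp_nat_mul, mul_one]
  calc (n:ℝ)^n = ((n:ℝ)^n / n.factorial) * n.factorial := by field_simp
    _ ≤ Real.exp 1 ^ n * n.factorial := mul_le_mul_of_nonneg_right h1 hfac.le

lemma my_factorial_lower (p q : ℕ) :
    (((p+q : ℕ):ℝ)/(2*Real.exp 1))^(p+q) ≤ (p.factorial : ℝ) * q.factorial := by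
  have h2e : (0:ℝ) < 2 * Real.exp 1 := by positivity
  have hnat : ((p+q).factorial : ℕ) ≤ 2^(p+q) * (p.factorial * q.factorial) := by
    have h := Nat.choose_mul_factorial_mul_factorial (Nat.le_add_right p q)
    rw [Nat.add_sub_cancel_left] at h
    calc (p+q).factorial = (p+q).choose p * p.factorial * q.factorial := h.symm
      _ ≤ 2^(p+q) * p.factorial * q.factorial := by
          exact Nat.mul_le_mul_right _ (Nat.mul_le_mul_right _ (my_choose_le_two_pow _ _))
      _ = 2^(p+q) * (p.factorial * q.factorial) := by ring
  have hR : ((p+q).factorial : ℝ) ≤ 2^(p+q) * ((p.factorial : ℝ) * q.factorial) := by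
    exact_mod_cast hnat
  have h1 : (((p+q:ℕ)):ℝ)^(p+q) ≤ Real.exp 1 ^ (p+q) * (p+q).factorial :=
    my_pow_le_exp_mul_factorial (p+q)
  rw [div_pow, div_le_iff₀ (by positivity)]
  calc (((p+q:ℕ)):ℝ)^(p+q) ≤ Real.exp 1 ^ (p+q) * (p+q).factorial := h1
    _ ≤ Real.exp 1 ^ (p+q) * (2^(p+q) * ((p.factorial : ℝ) * q.factorial)) := by
        exact mul_le_mul_of_nonneg_left hR (by positivity)
    _ = (p.factorial : ℝ) * q.factorial * (2*Real.exp 1)^(p+q) := by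
        rw [mul_pow]; ring

lemma my_term_le (A : ℝ) (hA : 0 < A) (p q : ℕ) (hp : 1 ≤ p) (hq : 1 ≤ q) :
    A ^ (2*(p+q)) / ((p.factorial:ℝ)^2 * (q.factorial:ℝ)^2)
      ≤ (2 * Real.exp 1 * A / ((p:ℝ)+q)) ^ (2*(p+q)) := by
  have hsR : (0:ℝ) < (p:ℝ) + q := by positivity
  have h2e : (0:ℝ) < 2 * Real.exp 1 := by positivity
  have key : (((p:ℝ)+q)/(2*Real.exp 1))^(p+q) ≤ (p.factorial : ℝ) * q.factorial := by
    have := my_factorial_lower p q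
    push_cast at this
    exact this
  have hfacpos : (0:ℝ) < (p.factorial:ℝ)^2 * (q.factorial:ℝ)^2 := by positivity
  rw [div_le_iff₀ hfacpos]
  have hAeq : A ^ (2*(p+q)) =
      (2 * Real.exp 1 * A / ((p:ℝ)+q)) ^ (2*(p+q)) * ((((p:ℝ)+q)/(2*Real.exp 1))^(p+q))^2 := by
    rw [← pow_mul, mul_comm (p+q) 2, ← mul_pow]
    congr 1
    field_simp
  rw [hAeq]
  apply mul_le_mul_of_nonneg_left _ (by positivity)
  calc ((((p:ℝ)+q)/(2*Real.exp 1))^(p+q))^2 ≤ ((p.factorial : ℝ) * q.factorial)^2 :=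
      pow_le_pow_left₀ (by positivity) key 2
    _ = (p.factorial:ℝ)^2 * (q.factorial:ℝ)^2 := mul_pow _ _ 2
section helpers

lemma my_summable_F (A : ℝ) :
    Summable (fun pq : ℕ × ℕ =>
      A ^ (2*(pq.1+pq.2)) / ((pq.1.factorial:ℝ)^2 * (pq.2.factorial:ℝ)^2)) := by
  have hg : Summable (fun n : ℕ => (A^2)^n / ((n.factorial:ℝ)^2)) := by
    refine Summable.of_nonneg_of_le (fun n => by positivity) (fun n => ?_)
      (Real.summable_pow_div_factorial (A^2))
    refine div_le_div_of_nonneg_left (by positivity) (by positivity) ?_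
    have h1 : (1:ℝ) ≤ (n.factorial:ℝ) := by exact_mod_cast n.factorial_pos
    nlinarith
  have h := hg.mul_of_nonneg hg (fun n => by positivity) (fun n => by positivity)
  refine h.congr fun pq => ?_
  obtain ⟨p, q⟩ := pq
  simp only
  rw [pow_mul, pow_add, div_mul_div_comm]

end helpers

/-- Tail estimate (3.11): for `κ < μ`, the sum over pairs `(p₁, p₂)` of positive
integers with `p₁ + p₂ > M^μ` of `(C M^κ T)^(2(p₁+p₂)) / (p₁!² p₂!²)` decays
superexponentially in `M^μ`. -/
theorem tail_sum_estimate (κ μ T : ℝ) (hκ : 0 < κ) (hμ : 0 < μ) (hT : 0 < T)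
    (hκμ : κ < μ) (C : ℝ) (hC : 0 < C) :
    ∃ C' : ℝ, 0 < C' ∧ ∃ M₀ : ℝ, ∀ M : ℝ, M₀ ≤ M →
      (∑' p : {q : ℕ × ℕ // 1 ≤ q.1 ∧ 1 ≤ q.2 ∧ M ^ μ < ((q.1 : ℝ) + q.2)},
          (C * M ^ κ * T) ^ (2 * ((p : ℕ × ℕ).1 + (p : ℕ × ℕ).2)) /
            (((p : ℕ × ℕ).1.factorial : ℝ) ^ 2 * ((p : ℕ × ℕ).2.factorial : ℝ) ^ 2))
        ≤ (C' * M ^ (κ - μ) * T) ^ (2 * M ^ μ) * M ^ (2 * μ) := by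
  classical
  set e := Real.exp 1 with he
  have he0 : 0 < e := Real.exp_pos 1
  set C' := 2 * e * C with hC'
  have hC'0 : 0 < C' := by positivity
  refine ⟨C', hC'0, ?_⟩
  -- eventual conditions
  have h0 : Tendsto (fun M : ℝ => M ^ (κ - μ)) atTop (nhds 0) := by
    have := tendsto_rpow_neg_atTop (y := μ - κ) (by linarith)
    simpa [neg_sub] using this
  have h1 : Tendsto (fun M : ℝ => C' * M ^ (κ - μ) * T) atTop (nhds 0) := by
    have := (h0.const_mul C').mul_const T
    simpa using this
  have h2 : Tendsto (fun M : ℝ => M ^ μ) atTop atTop := tendsto_rpow_atTop hμ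
  have hev : ∀ᶠ M : ℝ in atTop,
      (1 ≤ M ∧ 16 ≤ M ^ μ) ∧ C' * M ^ (κ - μ) * T ≤ 1/2 := by
    filter_upwards [eventually_ge_atTop (1:ℝ), h2.eventually_ge_atTop 16,
      h1.eventually_lt_const (by norm_num : (0:ℝ) < 1/2)] with M hM1 hM16 hMb
    exact ⟨⟨hM1, hM16⟩, hMb.le⟩
  obtain ⟨M₀, hM₀⟩ := eventually_atTop.mp hev
  refine ⟨M₀, fun M hM => ?_⟩
  obtain ⟨⟨hM1, hM16⟩, hble⟩ := hM₀ M hM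
  have hM0 : (0:ℝ) < M := lt_of_lt_of_le one_pos hM1
  have hMμ : (0:ℝ) < M ^ μ := Real.rpow_pos_of_pos hM0 μ
  have hMκμ : (0:ℝ) < M ^ (κ - μ) := Real.rpow_pos_of_pos hM0 _
  have hMκ : (0:ℝ) < M ^ κ := Real.rpow_pos_of_pos hM0 _
  set A := C * M ^ κ * T with hA
  have hA0 : 0 < A := by positivity
  set b := C' * M ^ (κ - μ) * T with hb
  have hb0 : 0 < b := by positivity
  set x := b ^ 2 with hx
  have hx0 : 0 < x := by positivity
  have hxhalf : x ≤ 1/2 := by nlinarith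
  have hx1 : x < 1 := by linarith
  set N := ⌊M ^ μ⌋₊ + 1 with hN
  have hNR : M ^ μ < (N:ℝ) := by
    rw [hN]; push_cast; exact Nat.lt_floor_add_one _
  -- the dominating function
  set H : ℕ × ℕ → ℝ := fun jp => if jp.2 < N + jp.1 + 1 then x ^ (N + jp.1) else 0 with hH
  have hHnn : ∀ c, 0 ≤ H c := by
    intro c; rw [hH]; dsimp only; split <;> positivity
  have hHslice : ∀ j, Summable (fun p => H (j, p)) := by
    intro j
    refine summable_of_ne_finset_zero (s := Finset.range (N+j+1)) (fun p hp => ?_)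
    rw [hH]; dsimp only; rw [if_neg (by simpa using hp)]
  have hHinner : ∀ j, ∑' p, H (j, p) = ((N+j+1 : ℕ):ℝ) * x ^ (N+j) := by
    intro j
    rw [tsum_eq_sum (s := Finset.range (N+j+1))
      (fun p hp => by rw [hH]; dsimp only; rw [if_neg (by simpa using hp)])]
    have hcongr : ∀ p ∈ Finset.range (N+j+1), H (j, p) = x ^ (N+j) := by
      intro p hp; rw [hH]; dsimp only; rw [if_pos (Finset.mem_range.mp hp)]
    rw [Finset.sum_congr rfl hcongr, Finset.sum_const, Finset.card_range, nsmul_eq_mul]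
  have houter_eq : (fun j : ℕ => ((N+j+1 : ℕ):ℝ) * x ^ (N+j))
      = fun j : ℕ => ((N:ℝ)+1) * x^N * x^j + x^N * ((j:ℝ) * x^j) := by
    funext j; rw [pow_add]; push_cast; ring
  have hsum1 : Summable (fun j : ℕ => ((N:ℝ)+1) * x^N * x^j) :=
    (summable_geometric_of_lt_one hx0.le hx1).mul_left _
  have hnorm : ‖x‖ < 1 := by rwa [Real.norm_eq_abs, abs_of_pos hx0]
  have hsum2 : Summable (fun j : ℕ => x^N * ((j:ℝ) * x^j)) := by
    have hs : Summable (fun j : ℕ => (j:ℝ) * x^j) := by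
      have := summable_pow_mul_geometric_of_norm_lt_one (R := ℝ) 1 hnorm
      simpa using this
    exact hs.mul_left _
  have houter : Summable (fun j : ℕ => ((N+j+1 : ℕ):ℝ) * x ^ (N+j)) := by
    rw [houter_eq]; exact hsum1.add hsum2
  have hHsum : Summable H := by
    refine (summable_prod_of_nonneg hHnn).mpr ⟨hHslice, ?_⟩
    exact houter.congr fun j => (hHinner j).symm
  have htsumH : ∑' jp : ℕ × ℕ, H jp
      = ((N:ℝ)+1) * x^N * (1-x)⁻¹ + x^N * (x/(1-x)^2) := by
    rw [Summable.tsum_prod' hHsum hHslice]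
    calc ∑' (j) (p), H (j, p) = ∑' j : ℕ, ((N+j+1 : ℕ):ℝ) * x ^ (N+j) :=
          tsum_congr hHinner
      _ = ∑' j : ℕ, (((N:ℝ)+1) * x^N * x^j + x^N * ((j:ℝ) * x^j)) := by rw [houter_eq]
      _ = (((N:ℝ)+1) * x^N) * ∑' j : ℕ, x^j + x^N * ∑' j : ℕ, ((j:ℝ) * x^j) := by
          rw [Summable.tsum_add hsum1 hsum2, tsum_mul_left, tsum_mul_left]
      _ = _ := by
          rw [tsum_geometric_of_lt_one hx0.le hx1,
            tsum_coe_mul_geometric_of_norm_lt_one hnorm]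
  have hHbound : ∑' jp : ℕ × ℕ, H jp ≤ x^N * (2*(N:ℝ) + 4) := by
    rw [htsumH]
    have hx' : (0:ℝ) < 1 - x := by linarith
    have hinv : (1-x)⁻¹ ≤ 2 := by
      rw [inv_le_comm₀ (by linarith) (by norm_num)]; linarith
    have hfrac : x/(1-x)^2 ≤ 2 := by
      rw [div_le_iff₀ (by positivity)]; nlinarith
    have hxN : (0:ℝ) ≤ x^N := by positivity
    have t1 : ((N:ℝ)+1) * x^N * (1-x)⁻¹ ≤ ((N:ℝ)+1) * x^N * 2 :=
      mul_le_mul_of_nonneg_left hinv (by positivity)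
    have t2 : x^N * (x/(1-x)^2) ≤ x^N * 2 := mul_le_mul_of_nonneg_left hfrac hxN
    nlinarith
  -- summability of the original family on the subtype
  have hFsum : Summable (fun pq : ℕ × ℕ =>
      A ^ (2*(pq.1+pq.2)) / ((pq.1.factorial:ℝ)^2 * (pq.2.factorial:ℝ)^2)) :=
    my_summable_F A
  have hfS : Summable (fun p : {q : ℕ × ℕ // 1 ≤ q.1 ∧ 1 ≤ q.2 ∧ M ^ μ < ((q.1 : ℝ) + q.2)} =>
      A ^ (2 * ((p : ℕ × ℕ).1 + (p : ℕ × ℕ).2)) /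
        (((p : ℕ × ℕ).1.factorial : ℝ) ^ 2 * ((p : ℕ × ℕ).2.factorial : ℝ) ^ 2)) :=
    hFsum.comp_injective Subtype.val_injective
  -- key comparison
  have hmain : (∑' p : {q : ℕ × ℕ // 1 ≤ q.1 ∧ 1 ≤ q.2 ∧ M ^ μ < ((q.1 : ℝ) + q.2)},
      A ^ (2 * ((p : ℕ × ℕ).1 + (p : ℕ × ℕ).2)) /
        (((p : ℕ × ℕ).1.factorial : ℝ) ^ 2 * ((p : ℕ × ℕ).2.factorial : ℝ) ^ 2))
      ≤ ∑' jp : ℕ × ℕ, H jp := by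
    have hsN : ∀ p q : ℕ, M ^ μ < (p:ℝ) + q → N ≤ p + q := by
      intro p q hs
      have hfl : ⌊M ^ μ⌋₊ < p + q := by
        rw [Nat.floor_lt hMμ.le]; push_cast; exact hs
      omega
    refine Summable.tsum_le_tsum_of_inj (fun a => (a.1.1 + a.1.2 - N, a.1.1)) ?_
      (fun c _ => hHnn c) ?_ hfS hHsum
    · rintro ⟨⟨p, q⟩, hpq⟩ ⟨⟨p', q'⟩, hpq'⟩ hab
      have h1 := congrArg Prod.fst hab
      have h2 := congrArg Prod.snd hab
      dsimp only at h1 h2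
      have hn1 : N ≤ p + q := hsN p q hpq.2.2
      have hn2 : N ≤ p' + q' := hsN p' q' hpq'.2.2
      have hpp : p = p' := h2
      have hqq : q = q' := by omega
      subst hpp; subst hqq; rfl
    · rintro ⟨⟨p, q⟩, hp, hq, hs⟩
      have hsN' : N ≤ p + q := hsN p q hs
      have hNj : N + (p + q - N) = p + q := by omega
      dsimp only
      rw [hH]
      dsimp only
      rw [if_pos (by omega), hNj]
      calc A ^ (2*(p+q)) / ((p.factorial:ℝ)^2 * (q.factorial:ℝ)^2)
          ≤ (2 * e * A / ((p:ℝ) + q)) ^ (2*(p+q)) := my_term_le A hA0 p q hp hq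
        _ ≤ b ^ (2*(p+q)) := by
            refine pow_le_pow_left₀ (by positivity) ?_ _
            have hle : 2*e*A/((p:ℝ)+q) ≤ 2*e*A/(M^μ) := by
              refine div_le_div_of_nonneg_left (by positivity) hMμ ?_
              exact_mod_cast hs.le
            have heq : 2*e*A/(M^μ) = b := by
              rw [hA, hb, hC', Real.rpow_sub hM0]
              field_simp
            linarith
        _ = x ^ (p+q) := by rw [pow_mul, ← hx]
  -- final chain
  have e1 : x^N ≤ x ^ (M ^ μ) := by
    calc x^N = x ^ ((N:ℕ):ℝ) := (Real.rpow_natCast x N).symm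
      _ ≤ x ^ (M ^ μ) :=
          Real.rpow_le_rpow_of_exponent_ge hx0 (by linarith) hNR.le
  have e2 : b ^ (2 * M ^ μ) = x ^ (M ^ μ) := by
    rw [Real.rpow_mul hb0.le, Real.rpow_two, ← hx]
  have e3 : 2*(N:ℝ) + 4 ≤ M ^ (2*μ) := by
    have hfl : (N:ℝ) ≤ M^μ + 1 := by
      rw [hN]; push_cast
      have := Nat.floor_le hMμ.le
      linarith
    have e4 : M ^ (2*μ) = (M^μ)^2 := by
      rw [show (2:ℝ)*μ = μ*2 by ring, Real.rpow_mul hM0.le, Real.rpow_two]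
    rw [e4]; nlinarith
  calc (∑' p : {q : ℕ × ℕ // 1 ≤ q.1 ∧ 1 ≤ q.2 ∧ M ^ μ < ((q.1 : ℝ) + q.2)},
      A ^ (2 * ((p : ℕ × ℕ).1 + (p : ℕ × ℕ).2)) /
        (((p : ℕ × ℕ).1.factorial : ℝ) ^ 2 * ((p : ℕ × ℕ).2.factorial : ℝ) ^ 2))
      ≤ ∑' jp : ℕ × ℕ, H jp := hmain
    _ ≤ x^N * (2*(N:ℝ) + 4) := hHbound
    _ ≤ x ^ (M ^ μ) * (2*(N:ℝ) + 4) := mul_le_mul_of_nonneg_right e1 (by positivity)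
    _ ≤ x ^ (M ^ μ) * M ^ (2*μ) :=
        mul_le_mul_of_nonneg_left e3 (Real.rpow_nonneg hx0.le _)
    _ = b ^ (2 * M ^ μ) * M ^ (2*μ) := by rw [e2]
end
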